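/- If two minimizers α and α' of the Lasso objective ‖x − Dα‖₂² + λ‖α‖₁ exist, then Dα = Dα' and ‖α‖₁ = ‖α'‖₁; i.e., the fitted value and the ℓ₁-norm of the solution are unique even when the minimizer is not. -/

import Mathlib

/-! The objective is convex in `α` and strictly convex in the fitted value `Dα`: at the midpoint
of two minimizers it drops below their common value by `‖(Dα - Dα')/2‖²`, which must therefore
vanish. With the fitted values equal, equality of the objectives leaves `λ‖α‖₁ = λ‖α'‖₁`. -/

open Finset

noncomputable def normSq {m : ℕ} (x : Fin m → ℝ) : ℝ := ∑ i, (x i) ^ 2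
noncomputable def normL1 {k : ℕ} (α : Fin k → ℝ) : ℝ := ∑ j, |α j|

lemma normSq_nonneg {m : ℕ} (z : Fin m → ℝ) : 0 ≤ normSq z :=
  sum_nonneg fun i _ => sq_nonneg (z i)

lemma normSq_eq_zero_iff {m : ℕ} (z : Fin m → ℝ) : normSq z = 0 ↔ z = 0 := by
  simp only [normSq, sum_eq_zero_iff_of_nonneg fun i _ => sq_nonneg (z i), mem_univ,
    true_implies, pow_eq_zero_iff two_ne_zero, funext_iff, Pi.zero_apply]

lemma normSq_apollonius {m : ℕ} (x u v : Fin m → ℝ) :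
    normSq (x - (1 / 2 : ℝ) • (u + v)) + normSq ((1 / 2 : ℝ) • (u - v)) =
      (normSq (x - u) + normSq (x - v)) / 2 := by
  simp only [normSq, Pi.sub_apply, Pi.smul_apply, Pi.add_apply, smul_eq_mul]
  rw [← sum_add_distrib, ← sum_add_distrib, sum_div]
  exact sum_congr rfl fun i _ => by ring

lemma normL1_midpoint_le {k : ℕ} (α α' : Fin k → ℝ) :
    normL1 ((1 / 2 : ℝ) • (α + α')) ≤ (normL1 α + normL1 α') / 2 := by
  simp only [normL1, Pi.smul_apply, Pi.add_apply, smul_eq_mul]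
  rw [← sum_add_distrib, sum_div]
  refine sum_le_sum fun j _ => ?_
  rw [abs_mul, abs_of_pos one_half_pos]
  linarith [abs_add_le (α j) (α' j)]

noncomputable def lassoObjective {m k : ℕ} (D : Matrix (Fin m) (Fin k) ℝ) (x : Fin m → ℝ)
    (lam : ℝ) (α : Fin k → ℝ) : ℝ :=
  normSq (x - D.mulVec α) + lam * normL1 α

lemma lassoObjective_midpoint_add_le {m k : ℕ} (D : Matrix (Fin m) (Fin k) ℝ) (x : Fin m → ℝ)
    {lam : ℝ} (hlam : 0 ≤ lam) (α α' : Fin k → ℝ) :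
    lassoObjective D x lam ((1 / 2 : ℝ) • (α + α')) +
        normSq ((1 / 2 : ℝ) • (D.mulVec α - D.mulVec α')) ≤
      (lassoObjective D x lam α + lassoObjective D x lam α') / 2 := by
  have hfit := normSq_apollonius x (D.mulVec α) (D.mulVec α')
  have hl1 := mul_le_mul_of_nonneg_left (normL1_midpoint_le α α') hlam
  rw [lassoObjective, Matrix.mulVec_smul, Matrix.mulVec_add, lassoObjective, lassoObjective]
  linarith

/-- uniqueness of the fitted value and of the ℓ₁ norm of
Lasso minimizers: if α and α' both minimize ‖x − Dα‖² + λ‖α‖₁ then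
Dα = Dα' and ‖α‖₁ = ‖α'‖₁. -/
theorem lasso_fitted_value_unique {m k : ℕ}
    (D : Matrix (Fin m) (Fin k) ℝ) (x : Fin m → ℝ) (lam : ℝ) (hlam : 0 < lam)
    (α α' : Fin k → ℝ)
    (hα : ∀ β : Fin k → ℝ,
      normSq (x - D.mulVec α) + lam * normL1 α ≤
      normSq (x - D.mulVec β) + lam * normL1 β)
    (hα' : ∀ β : Fin k → ℝ,
      normSq (x - D.mulVec α') + lam * normL1 α' ≤
      normSq (x - D.mulVec β) + lam * normL1 β) :
    D.mulVec α = D.mulVec α' ∧ normL1 α = normL1 α' := by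
  have hmin : ∀ β, lassoObjective D x lam α ≤ lassoObjective D x lam β := hα
  have hobj : lassoObjective D x lam α = lassoObjective D x lam α' :=
    le_antisymm (hα α') (hα' α)
  have hmid := lassoObjective_midpoint_add_le D x hlam.le α α'
  have hgap : normSq ((1 / 2 : ℝ) • (D.mulVec α - D.mulVec α')) = 0 :=
    le_antisymm (by linarith [hmin ((1 / 2 : ℝ) • (α + α'))]) (normSq_nonneg _)
  have hfit : D.mulVec α = D.mulVec α' := by
    rw [normSq_eq_zero_iff, smul_eq_zero, sub_eq_zero] at hgap
    exact hgap.resolve_left one_half_pos.ne'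
  refine ⟨hfit, mul_left_cancel₀ hlam.ne' ?_⟩
  rw [lassoObjective, lassoObjective, hfit] at hobj
  linarith
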